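/- Let K be a compact metric space and f : K → K a map satisfying d(f(x), f(y)) ≥ d(x, y) for all x, y ∈ K. Then f is an isometry (i.e., f is distance-preserving and surjective). -/
import Mathlib

private lemma iter_mono {K : Type*} [MetricSpace K] (f : K → K)
    (hf : ∀ x y : K, dist x y ≤ dist (f x) (f y)) :
    ∀ n (x y : K), dist x y ≤ dist (f^[n] x) (f^[n] y) := by
  intro n
  induction n with
  | zero => simp
  | succ n ih =>
    intro x y
    calc dist x y ≤ dist (f x) (f y) := hf x y
    _ ≤ dist (f^[n] (f x)) (f^[n] (f y)) := ih _ _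
    _ = dist (f^[n+1] x) (f^[n+1] y) := by
        simp [Function.iterate_succ_apply]

private lemma almost_periodic {K : Type*} [MetricSpace K] [CompactSpace K] (f : K → K)
    (hf : ∀ x y : K, dist x y ≤ dist (f x) (f y)) (x y : K) {ε : ℝ} (hε : 0 < ε) :
    ∃ n, 1 ≤ n ∧ dist (f^[n] x) x < ε ∧ dist (f^[n] y) y < ε := by
  set u : ℕ → K × K := fun n => (f^[n] x, f^[n] y) with hu
  obtain ⟨a, -, φ, hφ, hconv⟩ :=
    isCompact_univ.tendsto_subseq (x := u) (fun n => Set.mem_univ _)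
  have hcauchy : CauchySeq (u ∘ φ) := hconv.cauchySeq
  rw [Metric.cauchySeq_iff] at hcauchy
  obtain ⟨N, hN⟩ := hcauchy ε hε
  have h1 : dist (u (φ N)) (u (φ (N+1))) < ε := hN N le_rfl (N+1) (by omega)
  have hlt : φ N < φ (N+1) := hφ (by omega)
  refine ⟨φ (N+1) - φ N, by omega, ?_, ?_⟩
  · calc dist (f^[φ (N+1) - φ N] x) x ≤ dist (f^[φ N] (f^[φ (N+1) - φ N] x)) (f^[φ N] x) := iter_mono f hf _ _ _
      _ = dist (f^[φ (N+1)] x) (f^[φ N] x) := by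
          rw [← Function.iterate_add_apply, Nat.add_sub_cancel' hlt.le]
      _ < ε := by
          have := h1
          rw [Prod.dist_eq] at this
          have := lt_of_le_of_lt (le_max_left _ _) this
          rwa [dist_comm]
  · calc dist (f^[φ (N+1) - φ N] y) y ≤ dist (f^[φ N] (f^[φ (N+1) - φ N] y)) (f^[φ N] y) := iter_mono f hf _ _ _
      _ = dist (f^[φ (N+1)] y) (f^[φ N] y) := by
          rw [← Function.iterate_add_apply, Nat.add_sub_cancel' hlt.le]
      _ < ε := by
          have := h1
          rw [Prod.dist_eq] at this
          have := lt_of_le_of_lt (le_max_right _ _) this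
          rwa [dist_comm]

/-- A non-contracting self-map of a compact metric space is an isometry
(distance-preserving and surjective). -/
theorem stmt_0 {K : Type*} [MetricSpace K] [CompactSpace K] (f : K → K)
    (hf : ∀ x y : K, dist x y ≤ dist (f x) (f y)) :
    Isometry f ∧ Function.Surjective f := by
  have hiso : Isometry f := by
    apply Isometry.of_dist_eq
    intro x y
    refine le_antisymm ?_ (hf x y)
    refine le_of_forall_pos_le_add fun ε hε => ?_
    obtain ⟨n, hn1, hx, hy⟩ := almost_periodic f hf x y (half_pos hε)
    calc dist (f x) (f y) ≤ dist (f^[n-1] (f x)) (f^[n-1] (f y)) := iter_mono f hf _ _ _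
      _ = dist (f^[n] x) (f^[n] y) := by
          rw [← Function.iterate_succ_apply, ← Function.iterate_succ_apply]
          congr 2 <;> omega
      _ ≤ dist (f^[n] x) x + dist x y + dist y (f^[n] y) := dist_triangle4 _ _ _ _
      _ ≤ ε/2 + dist x y + ε/2 := by
          have := hx.le
          have := (dist_comm y (f^[n] y) ▸ hy.le)
          linarith
      _ = dist x y + ε := by ring
  refine ⟨hiso, ?_⟩
  have hclosed : IsClosed (Set.range f) := by
    have : IsCompact (Set.range f) := isCompact_range hiso.continuous
    exact this.isClosed
  intro x
  have hmem : x ∈ closure (Set.range f) := by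
    rw [Metric.mem_closure_iff]
    intro ε hε
    obtain ⟨n, hn1, hx, -⟩ := almost_periodic f hf x x hε
    exact ⟨f^[n] x, ⟨f^[n-1] x, by
      have h : (n-1)+1 = n := by omega
      conv_rhs => rw [← h]
      rw [Function.iterate_succ_apply']⟩,
      by rwa [dist_comm]⟩
  exact hclosed.closure_subset hmem
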